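/- arXiv:2202.01223 — 3 statements merged into one kernel-verified Lean document; each statement's English description precedes it below -/
import Mathlib

section
/- Fix an integer N ≥ 0. For a βγ-module M set K_N(M) = {v ∈ M : β_k·v = 0 and γ_k·v = 0 for all k > N}. Let 0 → U → V → W → 0 be a short exact sequence of βγ-modules such that V is smooth and such that for every j > N the operators β_j and γ_j act locally nilpotently on U (i.e. for each u ∈ U there exists m with β_j^m·u = 0 and γ_j^m·u = 0). Then the induced sequence 0 → K_N(U) → K_N(V) → K_N(W) → 0 is exact; in particular every element of K_N(W) lifts to an element of K_N(V). (This is the core of Lemma 2.3.2 of the paper, which reduces extensions of βγ-modules induced from the finite Weyl algebra A_N to extensions of A_N-modules.) -/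
noncomputable section

/-- A module-candidate for the βγ algebra: a complex vector space together with
operators giving the action of the modes `β_n` and `γ_n`. -/
structure BGRep : Type 1 where
  carrier : Type
  [isAddCommGroup : AddCommGroup carrier]
  [isModule : Module ℂ carrier]
  B : ℤ → (carrier →ₗ[ℂ] carrier)
  G : ℤ → (carrier →ₗ[ℂ] carrier)

attribute [instance] BGRep.isAddCommGroup BGRep.isModule

namespace BGRep

/-- The defining commutation relations of the βγ algebra. -/
def IsRep (M : BGRep) : Prop :=
  (∀ m n : ℤ, M.B m ∘ₗ M.B n = M.B n ∘ₗ M.B m) ∧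
  (∀ m n : ℤ, M.G m ∘ₗ M.G n = M.G n ∘ₗ M.G m) ∧
  (∀ m n : ℤ, M.B m ∘ₗ M.G n - M.G n ∘ₗ M.B m =
    if m = -n then -(LinearMap.id : M.carrier →ₗ[ℂ] M.carrier) else 0)

/-- Smoothness: every vector is annihilated by all sufficiently positive modes. -/
def Smooth (M : BGRep) : Prop :=
  ∀ v : M.carrier, ∃ K : ℤ, ∀ k : ℤ, K < k → M.B k v = 0 ∧ M.G k v = 0

/-- A homomorphism of βγ-modules. -/
structure Hom (M N : BGRep) where
  toLin : M.carrier →ₗ[ℂ] N.carrier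
  commB : ∀ (n : ℤ) (v : M.carrier), toLin (M.B n v) = N.B n (toLin v)
  commG : ∀ (n : ℤ) (v : M.carrier), toLin (M.G n v) = N.G n (toLin v)

/-- `K_N(M)`: the subspace of vectors killed by all modes `β_k`, `γ_k` with `k > N`. -/
def KN (M : BGRep) (N : ℤ) : Submodule ℂ M.carrier where
  carrier := {v | ∀ k : ℤ, N < k → M.B k v = 0 ∧ M.G k v = 0}
  zero_mem' := fun k _ => ⟨map_zero _, map_zero _⟩
  add_mem' := fun ha hb k hk =>
    ⟨by rw [map_add, (ha k hk).1, (hb k hk).1, add_zero],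
     by rw [map_add, (ha k hk).2, (hb k hk).2, add_zero]⟩
  smul_mem' := fun c v hv k hk =>
    ⟨by rw [map_smul, (hv k hk).1, smul_zero], by rw [map_smul, (hv k hk).2, smul_zero]⟩

end BGRep

/-! An element `w ∈ K_N(W)` lifts to some `v ∈ V`, and smoothness puts `v` in `K_K(V)` for some
`K ≥ N`. For `K > N ≥ 0`, `v` can be corrected by elements of `ker π = ι(U)` to lie in
`K_{K-1}(V)`. The key fact: if `[a, b] = s ≠ 0` and `a` is nilpotent at `x`, then `x = a c` with
`c` in every subspace containing `x` that is stable under `a` and `b`. Applied to `a = β_K`,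
`b = γ_{-K}` on `ker π ∩ K_K(V)` it corrects `v` so that `β_K v = 0`; applied to `a = γ_K`,
`b = β_{-K}` on the part of that subspace where `β_K` vanishes (stable because `K ≠ -K`) it
then also makes `γ_K v = 0`. For `N < 0`, `K_N(W) = 0` since `[β_0, γ_0] = -1`. -/

theorem mul_pow_succ_eq_of_mul_eq {R A : Type*} [CommRing R] [Ring A] [Algebra R A] {a b : A}
    {s : R} (h : a * b = b * a + algebraMap R A s) (n : ℕ) :
    a * b ^ (n + 1) = b ^ (n + 1) * a + ((n + 1 : R) * s) • b ^ n := by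
  induction n with
  | zero => simp [h, Algebra.algebraMap_eq_smul_one]
  | succ n ih =>
    rw [pow_succ b (n + 1), ← mul_assoc, ih, add_mul, mul_assoc, h, mul_add, ← mul_assoc,
      ← pow_succ, ← Algebra.commutes, ← Algebra.smul_def, smul_mul_assoc, ← pow_succ]
    push_cast
    module

namespace Module.End

open Finset

variable {K M : Type*} [Field K] [CharZero K] [AddCommGroup M] [Module K M]

theorem exists_mem_apply_eq_of_pow_apply_eq_zero {a b : Module.End K M} {s : K} (hs : s ≠ 0)
    (h : a * b = b * a + algebraMap K _ s) {S : Submodule K M} (ha : Set.MapsTo a S S)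
    (hb : Set.MapsTo b S S) {m : ℕ} {x : M} (hx : (a ^ m) x = 0) (hxS : x ∈ S) :
    ∃ c ∈ S, a c = x := by
  -- Since `a bᵏ⁺¹ = bᵏ⁺¹ a + (k+1) s bᵏ`, the `k`-th summand of the preimage below is mapped
  -- to `t k - t (k+1)`, so its image telescopes to `t 0 - t m = x`.
  set t : ℕ → M := fun k => ((-s⁻¹) ^ k / k.factorial) • (b ^ k) ((a ^ k) x)
  have step (k : ℕ) : a ((s⁻¹ * (-s⁻¹) ^ k / (k + 1).factorial) • (b ^ (k + 1)) ((a ^ k) x)) =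
      t k - t (k + 1) := by
    have hcomm := congr($(mul_pow_succ_eq_of_mul_eq h k) ((a ^ k) x))
    simp only [LinearMap.add_apply, LinearMap.smul_apply, mul_apply, ← mul_apply a (a ^ k),
      ← pow_succ'] at hcomm
    rw [map_smul, hcomm, smul_add, smul_smul, sub_eq_add_neg, add_comm, ← neg_smul]
    simp only [t, Nat.factorial_succ]
    push_cast
    congr 2
    · field_simp
    · ring
  refine ⟨∑ k ∈ range m, (s⁻¹ * (-s⁻¹) ^ k / (k + 1).factorial) • (b ^ (k + 1)) ((a ^ k) x),
    sum_mem fun k _ => S.smul_mem _ ?_, ?_⟩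
  · rw [coe_pow, coe_pow]
    exact (hb.iterate _) ((ha.iterate _) hxS)
  · rw [map_sum, sum_congr rfl fun k _ => step k, sum_range_sub']
    simp [t, hx]

end Module.End

namespace BGRep

variable {M : BGRep}

theorem KN_mono {N N' : ℤ} (h : N ≤ N') : M.KN N ≤ M.KN N' :=
  fun _ hv k hk => hv k (h.trans_lt hk)

theorem mem_KN_sub_one_iff {K : ℤ} {v : M.carrier} :
    v ∈ M.KN (K - 1) ↔ v ∈ M.KN K ∧ M.B K v = 0 ∧ M.G K v = 0 := by
  refine ⟨fun hv => ⟨KN_mono (by omega) hv, hv K (by omega)⟩, fun ⟨hv, hK⟩ k hk => ?_⟩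
  rcases (show K ≤ k by omega).eq_or_lt with rfl | hKk
  exacts [hK, hv k hKk]

namespace IsRep

variable (hM : M.IsRep)
include hM

theorem B_B_apply (m n : ℤ) (x : M.carrier) : M.B m (M.B n x) = M.B n (M.B m x) :=
  LinearMap.congr_fun (hM.1 m n) x

theorem G_G_apply (m n : ℤ) (x : M.carrier) : M.G m (M.G n x) = M.G n (M.G m x) :=
  LinearMap.congr_fun (hM.2.1 m n) x

theorem B_G_apply_of_ne {m n : ℤ} (h : m ≠ -n) (x : M.carrier) :
    M.B m (M.G n x) = M.G n (M.B m x) := by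
  have := LinearMap.congr_fun (hM.2.2 m n) x
  rw [if_neg h] at this
  exact sub_eq_zero.mp this

theorem B_mul_G_neg (m : ℤ) : M.B m * M.G (-m) = M.G (-m) * M.B m + algebraMap ℂ _ (-1) := by
  have := hM.2.2 m (-m)
  rw [if_pos (neg_neg m).symm] at this
  rw [map_neg, map_one]
  exact eq_add_of_sub_eq' this

theorem G_mul_B_neg (m : ℤ) : M.G m * M.B (-m) = M.B (-m) * M.G m + algebraMap ℂ _ 1 := by
  have := hM.2.2 (-m) m
  rw [if_pos rfl] at this
  rw [← neg_sub, neg_eq_iff_eq_neg, neg_neg] at this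
  rw [map_one]
  exact eq_add_of_sub_eq' this

theorem KN_eq_bot {N : ℤ} (hN : N < 0) : M.KN N = ⊥ := by
  refine eq_bot_iff.2 fun v hv => ?_
  have := LinearMap.congr_fun (hM.2.2 0 0) v
  simpa [(hv 0 hN).1, (hv 0 hN).2] using this.symm

theorem B_mem_KN {K j : ℤ} (hj : -K ≤ j) {v : M.carrier} (hv : v ∈ M.KN K) :
    M.B j v ∈ M.KN K := fun k hk =>
  ⟨by rw [hM.B_B_apply, (hv k hk).1, map_zero],
    by rw [← hM.B_G_apply_of_ne (by omega), (hv k hk).2, map_zero]⟩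

theorem G_mem_KN {K j : ℤ} (hj : -K ≤ j) {v : M.carrier} (hv : v ∈ M.KN K) :
    M.G j v ∈ M.KN K := fun k hk =>
  ⟨by rw [hM.B_G_apply_of_ne (by omega), (hv k hk).1, map_zero],
    by rw [hM.G_G_apply, (hv k hk).2, map_zero]⟩

end IsRep

namespace Hom

variable {M' : BGRep} (f : Hom M M')

theorem map_mem_KN {N : ℤ} {v : M.carrier} (hv : v ∈ M.KN N) : f.toLin v ∈ M'.KN N :=
  fun k hk => ⟨by rw [← f.commB, (hv k hk).1, map_zero], by rw [← f.commG, (hv k hk).2, map_zero]⟩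

theorem mem_KN_of_map_mem (hf : Function.Injective f.toLin) {N : ℤ} {v : M.carrier}
    (hv : f.toLin v ∈ M'.KN N) : v ∈ M.KN N :=
  fun k hk => ⟨hf (by rw [f.commB, (hv k hk).1, map_zero]),
    hf (by rw [f.commG, (hv k hk).2, map_zero])⟩

theorem B_mem_ker (j : ℤ) {v : M.carrier} (hv : v ∈ LinearMap.ker f.toLin) :
    M.B j v ∈ LinearMap.ker f.toLin := by
  rw [LinearMap.mem_ker, f.commB, hv, map_zero]

theorem G_mem_ker (j : ℤ) {v : M.carrier} (hv : v ∈ LinearMap.ker f.toLin) :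
    M.G j v ∈ LinearMap.ker f.toLin := by
  rw [LinearMap.mem_ker, f.commG, hv, map_zero]

theorem pow_B_apply (j : ℤ) (m : ℕ) (v : M.carrier) :
    f.toLin ((M.B j ^ m) v) = (M'.B j ^ m) (f.toLin v) :=
  LinearMap.congr_fun (Module.End.commute_pow_left_of_commute
    (LinearMap.ext fun v => (f.commB j v).symm) m).symm v

theorem pow_G_apply (j : ℤ) (m : ℕ) (v : M.carrier) :
    f.toLin ((M.G j ^ m) v) = (M'.G j ^ m) (f.toLin v) :=
  LinearMap.congr_fun (Module.End.commute_pow_left_of_commute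
    (LinearMap.ext fun v => (f.commG j v).symm) m).symm v

theorem exists_pow_apply_eq_zero_of_mem_range {j : ℤ}
    (hnil : ∀ u : M.carrier, ∃ m : ℕ, (M.B j ^ m) u = 0 ∧ (M.G j ^ m) u = 0) {x : M'.carrier}
    (hx : x ∈ LinearMap.range f.toLin) : ∃ m : ℕ, (M'.B j ^ m) x = 0 ∧ (M'.G j ^ m) x = 0 := by
  obtain ⟨u, rfl⟩ := hx
  obtain ⟨m, hB, hG⟩ := hnil u
  exact ⟨m, by rw [← f.pow_B_apply, hB, map_zero], by rw [← f.pow_G_apply, hG, map_zero]⟩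

end Hom

variable {U V W : BGRep}

theorem exists_mem_KN_B_eq_zero (hV : V.IsRep) (π : Hom V W) {K : ℤ} (hK : 0 ≤ K)
    {v : V.carrier} (hv : v ∈ V.KN K) (hker : π.toLin (V.B K v) = 0)
    (hnil : ∃ m : ℕ, (V.B K ^ m) (V.B K v) = 0) :
    ∃ v' ∈ V.KN K, V.B K v' = 0 ∧ π.toLin v' = π.toLin v := by
  obtain ⟨m, hm⟩ := hnil
  obtain ⟨c, ⟨hcπ, hcK⟩, hc⟩ := Module.End.exists_mem_apply_eq_of_pow_apply_eq_zero
    (neg_ne_zero.2 one_ne_zero) (hV.B_mul_G_neg K) (S := LinearMap.ker π.toLin ⊓ V.KN K)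
    (fun y ⟨hyπ, hyK⟩ => ⟨π.B_mem_ker K hyπ, hV.B_mem_KN (by omega) hyK⟩)
    (fun y ⟨hyπ, hyK⟩ => ⟨π.G_mem_ker _ hyπ, hV.G_mem_KN le_rfl hyK⟩)
    hm ⟨hker, hV.B_mem_KN (by omega) hv⟩
  exact ⟨v - c, sub_mem hv hcK, by rw [map_sub, hc, sub_self],
    by rw [map_sub, LinearMap.mem_ker.1 hcπ, sub_zero]⟩

theorem exists_mem_KN_B_eq_zero_G_eq_zero (hV : V.IsRep) (π : Hom V W) {K : ℤ} (hK : 0 < K)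
    {v : V.carrier} (hv : v ∈ V.KN K) (hBv : V.B K v = 0) (hker : π.toLin (V.G K v) = 0)
    (hnil : ∃ m : ℕ, (V.G K ^ m) (V.G K v) = 0) :
    ∃ v' ∈ V.KN K, V.B K v' = 0 ∧ V.G K v' = 0 ∧ π.toLin v' = π.toLin v := by
  obtain ⟨m, hm⟩ := hnil
  have hKK : K ≠ -K := by omega
  obtain ⟨c, ⟨⟨hcπ, hcK⟩, hcB⟩, hc⟩ := Module.End.exists_mem_apply_eq_of_pow_apply_eq_zero
    one_ne_zero (hV.G_mul_B_neg K)
    (S := LinearMap.ker π.toLin ⊓ V.KN K ⊓ LinearMap.ker (V.B K))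
    (fun y ⟨⟨hyπ, hyK⟩, hyB⟩ => ⟨⟨π.G_mem_ker K hyπ, hV.G_mem_KN (by omega) hyK⟩,
      show V.B K (V.G K y) = 0 by rw [hV.B_G_apply_of_ne hKK, LinearMap.mem_ker.1 hyB, map_zero]⟩)
    (fun y ⟨⟨hyπ, hyK⟩, hyB⟩ => ⟨⟨π.B_mem_ker _ hyπ, hV.B_mem_KN le_rfl hyK⟩,
      show V.B K (V.B (-K) y) = 0 by rw [hV.B_B_apply, LinearMap.mem_ker.1 hyB, map_zero]⟩)
    hm ⟨⟨hker, hV.G_mem_KN (by omega) hv⟩,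
      show V.B K (V.G K v) = 0 by rw [hV.B_G_apply_of_ne hKK, hBv, map_zero]⟩
  exact ⟨v - c, sub_mem hv hcK, by rw [map_sub, hBv, LinearMap.mem_ker.1 hcB, sub_self],
    by rw [map_sub, hc, sub_self], by rw [map_sub, LinearMap.mem_ker.1 hcπ, sub_zero]⟩

variable {ι : Hom U V} {π : Hom V W}

theorem exists_mem_KN_sub_one_map_eq (hV : V.IsRep)
    (hexact : LinearMap.range ι.toLin = LinearMap.ker π.toLin) {K : ℤ} (hK : 0 < K)
    (hnil : ∀ u : U.carrier, ∃ m : ℕ, (U.B K ^ m) u = 0 ∧ (U.G K ^ m) u = 0)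
    {v : V.carrier} (hv : v ∈ V.KN K) (hπv : π.toLin v ∈ W.KN (K - 1)) :
    ∃ v' ∈ V.KN (K - 1), π.toLin v' = π.toLin v := by
  have hker {x : V.carrier} (hx : π.toLin x = 0) :
      ∃ m : ℕ, (V.B K ^ m) x = 0 ∧ (V.G K ^ m) x = 0 :=
    ι.exists_pow_apply_eq_zero_of_mem_range hnil (by rw [hexact]; exact hx)
  obtain ⟨-, hπB, hπG⟩ := mem_KN_sub_one_iff.1 hπv
  have hBv : π.toLin (V.B K v) = 0 := by rw [π.commB, hπB]
  obtain ⟨v₁, hv₁, hBv₁, hπv₁⟩ :=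
    exists_mem_KN_B_eq_zero hV π hK.le hv hBv ((hker hBv).imp fun _ h => h.1)
  have hGv₁ : π.toLin (V.G K v₁) = 0 := by rw [π.commG, hπv₁, hπG]
  obtain ⟨v₂, hv₂, hBv₂, hGv₂, hπv₂⟩ :=
    exists_mem_KN_B_eq_zero_G_eq_zero hV π hK hv₁ hBv₁ hGv₁ ((hker hGv₁).imp fun _ h => h.2)
  exact ⟨v₂, mem_KN_sub_one_iff.2 ⟨hv₂, hBv₂, hGv₂⟩, hπv₂.trans hπv₁⟩

theorem exists_mem_KN_map_eq (hV : V.IsRep)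
    (hexact : LinearMap.range ι.toLin = LinearMap.ker π.toLin) {N : ℤ} (hN : 0 ≤ N)
    (hnil : ∀ j : ℤ, N < j → ∀ u : U.carrier, ∃ m : ℕ, (U.B j ^ m) u = 0 ∧ (U.G j ^ m) u = 0)
    {K : ℤ} (hNK : N ≤ K) {v : V.carrier} (hv : v ∈ V.KN K) (hπv : π.toLin v ∈ W.KN N) :
    ∃ v' ∈ V.KN N, π.toLin v' = π.toLin v := by
  induction K, hNK using Int.leInduction generalizing v with
  | base => exact ⟨v, hv, rfl⟩
  | succ K hNK ih =>
    obtain ⟨v₁, hv₁, hπv₁⟩ := exists_mem_KN_sub_one_map_eq hV hexact (by omega)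
      (hnil _ (by omega)) hv (by simpa using KN_mono hNK hπv)
    rw [add_sub_cancel_right] at hv₁
    obtain ⟨v', hv', hπv'⟩ := ih hv₁ (hπv₁ ▸ hπv)
    exact ⟨v', hv', hπv'.trans hπv₁⟩

end BGRep

theorem KN_exact_general (N : ℤ) (U V W : BGRep)
    (hV : V.IsRep) (hW : W.IsRep)
    (ι : BGRep.Hom U V) (π : BGRep.Hom V W)
    (hinj : Function.Injective ι.toLin) (hsurj : Function.Surjective π.toLin)
    (hexact : LinearMap.range ι.toLin = LinearMap.ker π.toLin)
    (hVsmooth : V.Smooth)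
    (hnil : ∀ j : ℤ, N < j → ∀ u : U.carrier,
      ∃ m : ℕ, (U.B j ^ m) u = 0 ∧ (U.G j ^ m) u = 0) :
    (∀ u ∈ U.KN N, ι.toLin u ∈ V.KN N) ∧
    (∀ v ∈ V.KN N, π.toLin v ∈ W.KN N) ∧
    (∀ u₁ ∈ U.KN N, ∀ u₂ ∈ U.KN N, ι.toLin u₁ = ι.toLin u₂ → u₁ = u₂) ∧
    (∀ v ∈ V.KN N, π.toLin v = 0 → ∃ u ∈ U.KN N, ι.toLin u = v) ∧
    (∀ w ∈ W.KN N, ∃ v ∈ V.KN N, π.toLin v = w) := by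
  refine ⟨fun _ => ι.map_mem_KN, fun _ => π.map_mem_KN, fun _ _ _ _ h => hinj h, ?_, ?_⟩
  · intro v hv hπv
    obtain ⟨u, rfl⟩ : v ∈ LinearMap.range ι.toLin := by rw [hexact]; exact hπv
    exact ⟨u, ι.mem_KN_of_map_mem hinj hv, rfl⟩
  · intro w hw
    rcases lt_or_ge N 0 with hN | hN
    · rw [hW.KN_eq_bot hN, Submodule.mem_bot] at hw
      exact ⟨0, zero_mem _, by rw [map_zero, hw]⟩
    · obtain ⟨v, rfl⟩ := hsurj w
      obtain ⟨K, hK⟩ := hVsmooth v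
      exact BGRep.exists_mem_KN_map_eq hV hexact hN hnil (le_max_left N K)
        (BGRep.KN_mono (le_max_right N K) hK) hw

/-- **Core of Lemma 2.3.2**: for a short exact sequence `0 → U → V → W → 0` of βγ-modules
with `V` smooth and the modes `β_j, γ_j` (`j > N`) acting locally nilpotently on `U`,
the induced sequence `0 → K_N(U) → K_N(V) → K_N(W) → 0` is exact. -/
theorem KN_exact (N : ℤ) (U V W : BGRep)
    (hU : U.IsRep) (hV : V.IsRep) (hW : W.IsRep)
    (ι : BGRep.Hom U V) (π : BGRep.Hom V W)
    (hinj : Function.Injective ι.toLin) (hsurj : Function.Surjective π.toLin)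
    (hexact : LinearMap.range ι.toLin = LinearMap.ker π.toLin)
    (hVsmooth : V.Smooth)
    (hnil : ∀ j : ℤ, N < j → ∀ u : U.carrier,
      ∃ m : ℕ, (U.B j ^ m) u = 0 ∧ (U.G j ^ m) u = 0) :
    (∀ u ∈ U.KN N, ι.toLin u ∈ V.KN N) ∧
    (∀ v ∈ V.KN N, π.toLin v ∈ W.KN N) ∧
    (∀ u₁ ∈ U.KN N, ∀ u₂ ∈ U.KN N, ι.toLin u₁ = ι.toLin u₂ → u₁ = u₂) ∧
    (∀ v ∈ V.KN N, π.toLin v = 0 → ∃ u ∈ U.KN N, ι.toLin u = v) ∧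
    (∀ w ∈ W.KN N, ∃ v ∈ V.KN N, π.toLin v = w) :=
  KN_exact_general N U V W hV hW ι π hinj hsurj hexact hVsmooth hnil
end
end

section
/- Let V = ⊕_{n∈ℤ} V_n be a finite-dimensional complex vector space graded by ℤ with only finitely many nonzero summands. Let σ, τ ∈ End(V) satisfy σ(V_n) ⊆ V_{n+1}, τ(V_n) ⊆ V_{n−1}, and σ² = τ² = 0. Set L = στ + τσ, let D ∈ End(V) act on V_n as multiplication by 2n, set H = D + L, K = exp(πiH/2), f(L) = Σ_{j≥0} c_j·L^j with c_j = −(−πi)^{j+1}/(j+1)! (the Taylor coefficients of (1−e^{−πix})/x; the series converges in End(V)), E = σ, and F = (1/(2i))·τ·f(L)·K. Then: K is invertible with inverse exp(−πiH/2); K·E = −E·K and K·F = −F·K; H·E − E·H = 2E and H·F − F·H = −2F; E·F − F·E = (K − K⁻¹)/(2i); and E² = F² = 0. In other words these operators satisfy the defining relations of the unrolled restricted quantum group of sl(2) at q = i, with K = q^H. (Lemma 5.2.1 of the paper.) -/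
open Complex

/-- The Taylor coefficients of the entire function `(1 - e^{-πix})/x`. -/
noncomputable def cCoeff (j : ℕ) : ℂ :=
  -(-(Real.pi : ℂ) * I) ^ (j + 1) / (Nat.factorial (j + 1))

open scoped Real Nat

/-!
Write `IsAdEigenvector A c B` for `[A, B] = c • B`. The grading gives `[D, σ] = 2σ` and
`[D, τ] = -2τ`, and `σ² = τ² = 0` makes `L = στ + τσ` commute with `σ` and `τ`; since eigenvalues
of `ad D` add under products, `L` also commutes with `D`, so `[H, σ] = 2σ` and `[H, τ] = -2τ`.
Exponentiating, `[A, B] = c • B` gives `e^A B = e^c B e^A`, so `K = e^{πiH/2}` anticommutes with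
`σ` and `τ` and commutes with `L` and `f(L)`; this yields every relation except the one for
`[E, F]`, which reduces to `L f(L) K = K - K⁻¹`. That follows from `L f(L) = 1 - e^{-πiL}` and
`e^{-πiL} K = K⁻¹ e^{πiD} = K⁻¹`, the last step because `D` has even integer eigenvalues.
-/

section AdEigenvector

variable {R 𝔸 : Type*} [CommRing R] [Ring 𝔸] [Algebra R 𝔸]

/-- Unlike `Module.End.HasEigenvector`, this allows `B = 0`. -/
def IsAdEigenvector (A : 𝔸) (c : R) (B : 𝔸) : Prop := A * B - B * A = c • B

namespace IsAdEigenvector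

variable {A A' B C : 𝔸} {b c c' : R}

lemma add_left (h : IsAdEigenvector A c B) (h' : IsAdEigenvector A' c' B) :
    IsAdEigenvector (A + A') (c + c') B := by
  unfold IsAdEigenvector at *
  rw [add_smul, ← h, ← h']
  noncomm_ring

lemma smul_left (h : IsAdEigenvector A c B) (t : R) : IsAdEigenvector (t • A) (t * c) B := by
  unfold IsAdEigenvector at *
  rw [smul_mul_assoc, mul_smul_comm, ← smul_sub, h, smul_smul]

lemma add (h : IsAdEigenvector A c B) (h' : IsAdEigenvector A c C) :
    IsAdEigenvector A c (B + C) := by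
  unfold IsAdEigenvector at *
  rw [smul_add, ← h, ← h']
  noncomm_ring

lemma smul (h : IsAdEigenvector A c B) (t : R) : IsAdEigenvector A c (t • B) := by
  unfold IsAdEigenvector at *
  rw [smul_mul_assoc, mul_smul_comm, ← smul_sub, h, smul_comm]

lemma mul (hB : IsAdEigenvector A b B) (hC : IsAdEigenvector A c C) :
    IsAdEigenvector A (b + c) (B * C) := by
  unfold IsAdEigenvector at *
  calc A * (B * C) - B * C * A = (A * B - B * A) * C + B * (A * C - C * A) := by noncomm_ring
    _ = (b + c) • (B * C) := by rw [hB, hC, smul_mul_assoc, mul_smul_comm, add_smul]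

end IsAdEigenvector

lemma isAdEigenvector_zero_iff {A B : 𝔸} : IsAdEigenvector A (0 : R) B ↔ Commute A B := by
  rw [IsAdEigenvector, zero_smul, sub_eq_zero]
  rfl

namespace IsAdEigenvector

variable {A B C : 𝔸} {c : R}

lemma add_left_of_commute (h : IsAdEigenvector A c B) (hC : Commute C B) :
    IsAdEigenvector (A + C) c B := by
  simpa using h.add_left (isAdEigenvector_zero_iff.2 hC)

lemma mul_of_commute (h : IsAdEigenvector A c B) (hC : Commute A C) :
    IsAdEigenvector A c (B * C) := by
  simpa using h.mul (isAdEigenvector_zero_iff.2 hC)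

lemma commute_mul_add_mul (hB : IsAdEigenvector A c B) (hC : IsAdEigenvector A (-c) C) :
    Commute A (B * C + C * B) := by
  have hBC : IsAdEigenvector A (0 : R) (B * C) := by simpa using hB.mul hC
  have hCB : IsAdEigenvector A (0 : R) (C * B) := by simpa using hC.mul hB
  exact isAdEigenvector_zero_iff.1 (hBC.add hCB)

end IsAdEigenvector

end AdEigenvector

section Ring

variable {𝔸 : Type*} [Ring 𝔸] {a b x : 𝔸}

lemma commute_mul_add_mul_of_mul_self_eq_zero (ha : a * a = 0) : Commute a (a * b + b * a) := by
  simp only [Commute, SemiconjBy, mul_add, add_mul, ← mul_assoc, ha, zero_mul, zero_add]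
  rw [mul_assoc b, ha, mul_zero, add_zero]

lemma mul_mul_mul_eq_zero_of_semiconjBy_neg (hb : b * b = 0) (hx : SemiconjBy x b (-b)) :
    b * x * (b * x) = 0 := by
  rw [mul_assoc, ← mul_assoc x, hx.eq]
  simp only [neg_mul, mul_neg, ← mul_assoc, hb, zero_mul, neg_zero]

lemma mul_mul_sub_mul_mul_of_semiconjBy_neg (hx : SemiconjBy x a (-a)) :
    a * (b * x) - b * x * a = (a * b + b * a) * x := by
  rw [mul_assoc b, hx.eq]
  noncomm_ring

end Ring

section Series

variable {𝔸 : Type*} [NormedRing 𝔸] [NormedAlgebra ℂ 𝔸] [CompleteSpace 𝔸]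

lemma norm_cCoeff (j : ℕ) : ‖cCoeff j‖ = π ^ (j + 1) / (j + 1)! := by
  simp [cCoeff, abs_of_nonneg Real.pi_pos.le]

lemma summable_cCoeff_smul_pow (Y : 𝔸) : Summable fun j ↦ cCoeff j • Y ^ j := by
  refine .of_norm_bounded_eventually_nat
    ((Real.summable_pow_div_factorial (π * ‖Y‖)).mul_left π) ?_
  filter_upwards [Filter.eventually_gt_atTop 0] with j hj
  calc ‖cCoeff j • Y ^ j‖ ≤ π ^ (j + 1) / (j + 1)! * ‖Y‖ ^ j := by
        rw [← norm_cCoeff]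
        exact (norm_smul_le _ _).trans (by gcongr; exact norm_pow_le' Y hj)
    _ ≤ π ^ (j + 1) / j ! * ‖Y‖ ^ j := by
        gcongr
        exact Nat.le_succ j
    _ = π * ((π * ‖Y‖) ^ j / j !) := by ring

lemma mul_tsum_cCoeff_smul_pow (Y : 𝔸) :
    Y * ∑' j, cCoeff j • Y ^ j = 1 - NormedSpace.exp ((-(π : ℂ) * I) • Y) := by
  have hterm (j : ℕ) : (((j + 1)! : ℂ)⁻¹ • ((-(π : ℂ) * I) • Y) ^ (j + 1))
      = -(Y * (cCoeff j • Y ^ j)) := by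
    rw [smul_pow, smul_smul, mul_smul_comm, ← _root_.pow_succ', ← neg_smul, cCoeff]
    congr 1
    ring
  have hexp := (hasSum_nat_add_iff' 1).2
    (NormedSpace.exp_series_hasSum_exp' (𝕂 := ℂ) ((-(π : ℂ) * I) • Y))
  simp only [hterm, Finset.range_one, Finset.sum_singleton, Nat.factorial_zero, Nat.cast_one,
    inv_one, pow_zero, one_smul] at hexp
  rw [← neg_sub, hexp.unique ((summable_cCoeff_smul_pow Y).hasSum.mul_left Y).neg, neg_neg]

end Series

section Exponential

variable {𝔸 : Type*} [NormedRing 𝔸] [NormedAlgebra ℚ 𝔸] [CompleteSpace 𝔸]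

lemma exp_mul_exp_neg (x : 𝔸) : NormedSpace.exp x * NormedSpace.exp (-x) = 1 := by
  rw [← NormedSpace.exp_add_of_commute (Commute.refl x).neg_right, add_neg_cancel,
    NormedSpace.exp_zero]

lemma exp_neg_mul_exp (x : 𝔸) : NormedSpace.exp (-x) * NormedSpace.exp x = 1 := by
  rw [← NormedSpace.exp_add_of_commute (Commute.refl x).neg_left, neg_add_cancel,
    NormedSpace.exp_zero]

variable [NormedAlgebra ℂ 𝔸]

lemma exp_add_smul_one (A : 𝔸) (c : ℂ) :
    NormedSpace.exp (A + c • 1) = Complex.exp c • NormedSpace.exp A := by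
  have hexp_c : NormedSpace.exp (c • (1 : 𝔸)) = Complex.exp c • 1 := by
    rw [← Algebra.algebraMap_eq_smul_one, ← NormedSpace.algebraMap_exp_comm, Complex.exp_eq_exp_ℂ,
      Algebra.algebraMap_eq_smul_one]
  rw [NormedSpace.exp_add_of_commute ((Commute.one_right A).smul_right c), hexp_c, mul_smul_one]

lemma IsAdEigenvector.exp_mul {A B : 𝔸} {c : ℂ} (h : IsAdEigenvector A c B) :
    NormedSpace.exp A * B = Complex.exp c • (B * NormedSpace.exp A) := by
  have hB : SemiconjBy B (A + c • 1) A := by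
    rw [SemiconjBy, mul_add, mul_smul_one, ← h]
    abel
  rw [← hB.exp_right.eq, exp_add_smul_one, mul_smul_comm]

lemma IsAdEigenvector.semiconjBy_exp_neg {A B : 𝔸} {c : ℂ} (h : IsAdEigenvector A c B)
    (hc : Complex.exp c = -1) : SemiconjBy (NormedSpace.exp A) B (-B) := by
  rw [SemiconjBy, h.exp_mul, hc, neg_one_smul, neg_mul]

lemma exp_neg_pi_I_smul_mul_exp_eq {D L : 𝔸} (hDL : Commute D L)
    (hD : NormedSpace.exp (((π : ℂ) * I) • D) = 1) :
    NormedSpace.exp ((-(π : ℂ) * I) • L) * NormedSpace.exp (((π : ℂ) * I / 2) • (D + L))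
      = NormedSpace.exp ((-((π : ℂ) * I) / 2) • (D + L)) := by
  have hL : Commute ((-(π : ℂ) * I) • L) (((π : ℂ) * I / 2) • (D + L)) :=
    ((hDL.symm.add_right (Commute.refl L)).smul_left _).smul_right _
  have hD' : Commute ((-((π : ℂ) * I) / 2) • (D + L)) (((π : ℂ) * I) • D) :=
    (((Commute.refl D).add_left hDL.symm).smul_left _).smul_right _
  rw [← NormedSpace.exp_add_of_commute hL]
  conv_rhs => rw [← mul_one (NormedSpace.exp _), ← hD, ← NormedSpace.exp_add_of_commute hD']
  congr 1
  module

end Exponential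

section Graded

lemma ContinuousLinearMap.ext_of_iSup_eq_top {ι R M N : Type*} [Semiring R] [AddCommMonoid M]
    [Module R M] [TopologicalSpace M] [AddCommMonoid N] [Module R N] [TopologicalSpace N]
    {Vn : ι → Submodule R M} (hV : iSup Vn = ⊤) {A B : M →L[R] N}
    (h : ∀ n, ∀ v ∈ Vn n, A v = B v) : A = B := by
  ext v
  have hv : v ∈ iSup Vn := hV ▸ Submodule.mem_top
  refine Submodule.iSup_induction Vn (motive := fun x ↦ A x = B x) hv h (by simp) ?_
  intro x y hx hy
  rw [map_add, map_add, hx, hy]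

variable {V : Type*} [NormedAddCommGroup V] [NormedSpace ℂ V] {Vn : ℤ → Submodule ℂ V}

lemma exp_apply_of_apply_eq_smul [CompleteSpace V] {A : V →L[ℂ] V} {v : V} {μ : ℂ}
    (h : A v = μ • v) : NormedSpace.exp A v = Complex.exp μ • v := by
  have hpow (n : ℕ) : (A ^ n) v = μ ^ n • v := by
    induction n with
    | zero => simp
    | succ n ih =>
      rw [pow_succ, mul_apply_eq_comp, h, map_smul, ih, smul_smul, pow_succ']
  have hsum :=
    (NormedSpace.exp_series_hasSum_exp' (𝕂 := ℂ) A).mapL (ContinuousLinearMap.apply ℂ V v)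
  have hsum' := (NormedSpace.exp_series_hasSum_exp' (𝕂 := ℂ) μ).smul_const v
  rw [Complex.exp_eq_exp_ℂ]
  refine hsum.unique ?_
  convert hsum' using 2 with n
  simp [hpow, smul_smul]

lemma isAdEigenvector_of_mapsTo (hV : iSup Vn = ⊤) {D A : V →L[ℂ] V}
    (hD : ∀ n, ∀ v ∈ Vn n, D v = ((2 * n : ℤ) : ℂ) • v) (k : ℤ)
    (hA : ∀ n, ∀ v ∈ Vn n, A v ∈ Vn (n + k)) : IsAdEigenvector D ((2 * k : ℤ) : ℂ) A := by
  refine ContinuousLinearMap.ext_of_iSup_eq_top hV fun n v hv ↦ ?_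
  rw [sub_apply, mul_apply_eq_comp, mul_apply_eq_comp, smul_apply, hD _ _ (hA n v hv), hD n v hv,
    map_smul, ← sub_smul]
  congr 1
  push_cast
  ring

lemma exp_pi_I_smul_eq_one [CompleteSpace V] (hV : iSup Vn = ⊤) {D : V →L[ℂ] V}
    (hD : ∀ n, ∀ v ∈ Vn n, D v = ((2 * n : ℤ) : ℂ) • v) :
    NormedSpace.exp (((π : ℂ) * I) • D) = 1 := by
  refine ContinuousLinearMap.ext_of_iSup_eq_top hV fun n v hv ↦ ?_
  have hv' : (((π : ℂ) * I) • D) v = (n * (2 * π * I)) • v := by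
    rw [smul_apply, hD n v hv, smul_smul]
    congr 1
    push_cast
    ring
  rw [exp_apply_of_apply_eq_smul hv', Complex.exp_int_mul_two_pi_mul_I, one_smul,
    one_apply_eq_self]

end Graded

theorem quantum_group_relations_of_isAdEigenvector {𝔸 : Type*} [NormedRing 𝔸]
    [NormedAlgebra ℚ 𝔸] [NormedAlgebra ℂ 𝔸] [CompleteSpace 𝔸] {σ τ D : 𝔸}
    (hσsq : σ * σ = 0) (hτsq : τ * τ = 0)
    (hDσ : IsAdEigenvector D (2 : ℂ) σ) (hDτ : IsAdEigenvector D (-2 : ℂ) τ)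
    (hexpD : NormedSpace.exp (((π : ℂ) * I) • D) = 1) :
    let L := σ * τ + τ * σ
    let H := D + L
    let K := NormedSpace.exp (((Real.pi : ℂ) * I / 2) • H)
    let Kinv := NormedSpace.exp ((-((Real.pi : ℂ) * I) / 2) • H)
    let fL := ∑' j : ℕ, cCoeff j • L ^ j
    let E := σ
    let F := (2 * I)⁻¹ • (τ * fL * K)
    (K * Kinv = 1 ∧ Kinv * K = 1) ∧
    K * E = -(E * K) ∧ K * F = -(F * K) ∧
    H * E - E * H = (2 : ℂ) • E ∧ H * F - F * H = (-2 : ℂ) • F ∧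
    E * F - F * E = (2 * I)⁻¹ • (K - Kinv) ∧
    E * E = 0 ∧ F * F = 0 := by
  intro L H K Kinv fL E F
  have hLσ : Commute L σ := (commute_mul_add_mul_of_mul_self_eq_zero hσsq).symm
  have hLτ : Commute L τ := by
    simpa only [add_comm] using (commute_mul_add_mul_of_mul_self_eq_zero (b := σ) hτsq).symm
  have hDL : Commute D L := hDσ.commute_mul_add_mul (by simpa using hDτ)
  have hHσ : IsAdEigenvector H (2 : ℂ) σ := hDσ.add_left_of_commute hLσ
  have hHτ : IsAdEigenvector H (-2 : ℂ) τ := hDτ.add_left_of_commute hLτ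
  have hHL : Commute H L := hDL.add_left (Commute.refl L)
  have hKσ : SemiconjBy K σ (-σ) := (hHσ.smul_left _).semiconjBy_exp_neg <| by
    rw [show (π : ℂ) * I / 2 * 2 = π * I by ring, Complex.exp_pi_mul_I]
  have hKτ : SemiconjBy K τ (-τ) := (hHτ.smul_left _).semiconjBy_exp_neg <| by
    rw [show (π : ℂ) * I / 2 * -2 = -(π * I) by ring, Complex.exp_neg, Complex.exp_pi_mul_I,
      inv_neg_one]
  have hfL (X : 𝔸) (h : Commute X L) : Commute X fL :=
    Commute.tsum_right _ fun j ↦ (h.pow_right j).smul_right _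
  have hKL : Commute K L := (hHL.smul_left _).exp_left
  have hHK : Commute H K := ((Commute.refl H).smul_right _).exp_right
  have hXσ : SemiconjBy (fL * K) σ (-σ) := SemiconjBy.mul_left (hfL σ hLσ.symm).symm.neg_right hKσ
  have hXτ : SemiconjBy (fL * K) τ (-τ) := SemiconjBy.mul_left (hfL τ hLτ.symm).symm.neg_right hKτ
  have hKX : Commute K (fL * K) := (hfL K hKL).mul_right (Commute.refl K)
  have hLX : L * (fL * K) = K - Kinv := by
    rw [← mul_assoc, mul_tsum_cCoeff_smul_pow, sub_mul, one_mul,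
      exp_neg_pi_I_smul_mul_exp_eq hDL hexpD]
  have hF : F = (2 * I)⁻¹ • (τ * (fL * K)) := by rw [← mul_assoc]
  have hKinv : Kinv = NormedSpace.exp (-(((π : ℂ) * I / 2) • H)) := by
    show NormedSpace.exp _ = _
    rw [neg_div, neg_smul]
  refine ⟨?_, ?_, ?_, hHσ, ?_, ?_, hσsq, ?_⟩
  · rw [hKinv]
    exact ⟨exp_mul_exp_neg _, exp_neg_mul_exp _⟩
  · rw [hKσ.eq, neg_mul]
  · rw [hF, mul_smul_comm, (hKτ.mul_right hKX).eq, smul_mul_assoc, neg_mul, neg_mul, smul_neg]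
  · rw [hF]
    exact (hHτ.mul_of_commute ((hfL H hHL).mul_right hHK)).smul _
  · rw [hF, mul_smul_comm, smul_mul_assoc, ← smul_sub,
      mul_mul_sub_mul_mul_of_semiconjBy_neg hXσ, hLX]
  · rw [hF, smul_mul_smul_comm, mul_mul_mul_eq_zero_of_semiconjBy_neg hτsq hXτ, smul_zero]

theorem quiver_quantum_group_relations_general
    (V : Type*) [NormedAddCommGroup V] [NormedSpace ℂ V] [FiniteDimensional ℂ V]
    (Vn : ℤ → Submodule ℂ V) (hinternal : DirectSum.IsInternal Vn)
    (σ τ D : V →L[ℂ] V)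
    (hσ : ∀ (n : ℤ), ∀ v ∈ Vn n, σ v ∈ Vn (n + 1))
    (hτ : ∀ (n : ℤ), ∀ v ∈ Vn n, τ v ∈ Vn (n - 1))
    (hσsq : σ * σ = 0) (hτsq : τ * τ = 0)
    (hD : ∀ (n : ℤ), ∀ v ∈ Vn n, D v = ((2 * n : ℤ) : ℂ) • v) :
    let L := σ * τ + τ * σ
    let H := D + L
    let K := NormedSpace.exp (((Real.pi : ℂ) * I / 2) • H)
    let Kinv := NormedSpace.exp ((-((Real.pi : ℂ) * I) / 2) • H)
    let fL := ∑' j : ℕ, cCoeff j • L ^ j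
    let E := σ
    let F := (2 * I)⁻¹ • (τ * fL * K)
    (K * Kinv = 1 ∧ Kinv * K = 1) ∧
    K * E = -(E * K) ∧ K * F = -(F * K) ∧
    H * E - E * H = (2 : ℂ) • E ∧ H * F - F * H = (-2 : ℂ) • F ∧
    E * F - F * E = (2 * I)⁻¹ • (K - Kinv) ∧
    E * E = 0 ∧ F * F = 0 := by
  have : CompleteSpace V := FiniteDimensional.complete ℂ V
  -- the API of `NormedSpace.exp` is stated for `ℚ`-Banach algebras
  let : NormedAlgebra ℚ (V →L[ℂ] V) := .restrictScalars ℚ ℂ _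
  have hV := hinternal.submodule_iSup_eq_top
  have hDσ : IsAdEigenvector D (2 : ℂ) σ := by simpa using isAdEigenvector_of_mapsTo hV hD 1 hσ
  have hDτ : IsAdEigenvector D (-2 : ℂ) τ := by
    simpa using isAdEigenvector_of_mapsTo hV hD (-1) (by simpa only [← sub_eq_add_neg] using hτ)
  exact quantum_group_relations_of_isAdEigenvector hσsq hτsq hDσ hDτ (exp_pi_I_smul_eq_one hV hD)

/-- **Lemma 5.2.1**: a finite-dimensional `ℤ`-graded module over the quiver algebra `Λ`
(operators `σ`, `τ` with `σ(V_n) ⊆ V_{n+1}`, `τ(V_n) ⊆ V_{n-1}`, `σ² = τ² = 0`) carries an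
action of the unrolled restricted quantum group `U̅_q^H(sl(2))` at `q = i` via
`H = D + L`, `K = e^{πiH/2}`, `E = σ`, `F = (2i)⁻¹ τ f(L) K`, where `L = στ + τσ`,
`D` acts on `V_n` by `2n`, and `f` is the Taylor series of `(1-e^{-πix})/x`. -/
theorem quiver_quantum_group_relations
    (V : Type*) [NormedAddCommGroup V] [NormedSpace ℂ V] [FiniteDimensional ℂ V]
    (Vn : ℤ → Submodule ℂ V) (hinternal : DirectSum.IsInternal Vn)
    (hfin : ∃ S : Finset ℤ, ∀ n : ℤ, n ∉ S → Vn n = ⊥)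
    (σ τ D : V →L[ℂ] V)
    (hσ : ∀ (n : ℤ), ∀ v ∈ Vn n, σ v ∈ Vn (n + 1))
    (hτ : ∀ (n : ℤ), ∀ v ∈ Vn n, τ v ∈ Vn (n - 1))
    (hσsq : σ * σ = 0) (hτsq : τ * τ = 0)
    (hD : ∀ (n : ℤ), ∀ v ∈ Vn n, D v = ((2 * n : ℤ) : ℂ) • v) :
    let L := σ * τ + τ * σ
    let H := D + L
    let K := NormedSpace.exp (((Real.pi : ℂ) * I / 2) • H)
    let Kinv := NormedSpace.exp ((-((Real.pi : ℂ) * I) / 2) • H)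
    let fL := ∑' j : ℕ, cCoeff j • L ^ j
    let E := σ
    let F := (2 * I)⁻¹ • (τ * fL * K)
    (K * Kinv = 1 ∧ Kinv * K = 1) ∧
    K * E = -(E * K) ∧ K * F = -(F * K) ∧
    H * E - E * H = (2 : ℂ) • E ∧ H * F - F * H = (-2 : ℂ) • F ∧
    E * F - F * E = (2 * I)⁻¹ • (K - Kinv) ∧
    E * E = 0 ∧ F * F = 0 :=
  quiver_quantum_group_relations_general V Vn hinternal σ τ D hσ hτ hσsq hτsq hD
end

section
/- Let A be the quotient of the free noncommutative ℂ-algebra on two generators ψ⁺, ψ⁻ by the two-sided ideal generated by (ψ⁺)² and (ψ⁻)², and let ℂ denote the one-dimensional left A-module on which ψ⁺ and ψ⁻ act by 0. Then Ext⁰_A(ℂ, ℂ) is a one-dimensional ℂ-vector space, and for every n ≥ 1, Ext^n_A(ℂ, ℂ) is a two-dimensional ℂ-vector space. (This is the Koszul-duality computation Ext•_A(ℂ,ℂ) ≅ A^! = ℂ[x,y]/(xy) used in the proof of Proposition 5.1.1 of the paper, where A is the enveloping algebra of the odd part of gl(1|1).) -/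
noncomputable section

open CategoryTheory

/-- The relations `(ψ⁺)² = (ψ⁻)² = 0` on the free algebra on two generators
(the generators are indexed by `Bool`: `true ↔ ψ⁺`, `false ↔ ψ⁻`). -/
inductive ARel : FreeAlgebra ℂ Bool → FreeAlgebra ℂ Bool → Prop
  | sq (b : Bool) : ARel (FreeAlgebra.ι ℂ b * FreeAlgebra.ι ℂ b) 0

/-- The algebra `A = ℂ⟨ψ⁺,ψ⁻⟩/((ψ⁺)², (ψ⁻)²)`. -/
abbrev AAlg : Type := RingQuot ARel

/-- The augmentation `A → ℂ`, killing `ψ⁺` and `ψ⁻`. -/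
def Aaug : AAlg →ₐ[ℂ] ℂ :=
  RingQuot.liftAlgHom ℂ ⟨FreeAlgebra.lift ℂ (fun _ => (0 : ℂ)), by
    rintro a b ⟨c⟩
    simp⟩

/-- The one-dimensional trivial `A`-module `ℂ`. -/
instance : Module AAlg ℂ := Module.compHom ℂ Aaug.toRingHom

/-- The trivial module as an object of the category of `A`-modules. -/
def Ctriv : ModuleCat AAlg := ModuleCat.of AAlg ℂ

/-!
`A` is the free product of two copies of `ℂ[ψ]/(ψ²)`, so the alternating words in `ψ⁺, ψ⁻` form
a basis of it; we see this by letting `A` act from the right on the span of alternating words.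
There, right multiplication by `ψ_c` has the contracting homotopy "delete a trailing `ψ_c`",
which gives `ker (· ψ_c) = A ψ_c`, `A ψ⁺ ∩ A ψ⁻ = 0` and `ker ε = A ψ⁺ + A ψ⁻`. Hence
`⋯ → A² → A² → A → ℂ`, with differentials `(a, b) ↦ (a ψ⁺, b ψ⁻)` and `(a, b) ↦ a ψ⁺ + b ψ⁻`,
is a free resolution of `ℂ`. Its differentials land in the augmentation ideal, so `Hom_A(-, ℂ)`
kills them and `Ext^n_A(ℂ, ℂ) = Hom_A(P_n, ℂ)`, which is `ℂ` for `n = 0` and `ℂ²` for `n ≥ 1`.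
-/

lemma ChainComplex.of_exactAt_succ_iff {C : Type*} [Category C] [Limits.HasZeroMorphisms C]
    (X : ℕ → C) (d : ∀ n, X (n + 1) ⟶ X n) (sq : ∀ n, d (n + 1) ≫ d n = 0) (n : ℕ) :
    (ChainComplex.of X d sq).ExactAt (n + 1) ↔ (ShortComplex.mk _ _ (sq n)).Exact := by
  rw [HomologicalComplex.exactAt_iff' _ (n + 2) (n + 1) n (by simp) (by simp)]
  exact ShortComplex.exact_iff_of_iso
    (ShortComplex.isoMk (Iso.refl _) (Iso.refl _) (Iso.refl _)
      (by erw [Category.id_comp, Category.comp_id]; exact (ChainComplex.of_d X d (n + 1)).symm)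
      (by erw [Category.id_comp, Category.comp_id]; exact (ChainComplex.of_d X d n).symm))

def CategoryTheory.ProjectiveResolution.ofExact {C : Type*} [Category C] [Abelian C] {Z : C}
    (X : ℕ → C) [∀ n, Projective (X n)] (d : ∀ n, X (n + 1) ⟶ X n)
    (sq : ∀ n, d (n + 1) ≫ d n = 0) (ε : X 0 ⟶ Z) (hε : d 0 ≫ ε = 0)
    (exact_zero : (ShortComplex.mk _ _ hε).Exact) [Epi ε]
    (exact_succ : ∀ n, (ShortComplex.mk _ _ (sq n)).Exact) : ProjectiveResolution Z where
  complex := ChainComplex.of X d sq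
  projective n := ‹∀ n, Projective (X n)› n
  π := (ChainComplex.toSingle₀Equiv _ Z).symm ⟨ε, by
    change ChainComplex.of.d X d (0 + 1) 0 ≫ ε = 0
    rwa [ChainComplex.of_d]⟩
  quasiIso := ⟨fun n => by
    cases n with
    | zero =>
      rw [ChainComplex.quasiIsoAt₀_iff, ShortComplex.quasiIso_iff_of_zeros']
      · refine (ShortComplex.exact_and_epi_g_iff_of_iso ?_).2 ⟨exact_zero, ‹Epi ε›⟩
        exact ShortComplex.isoMk (Iso.refl _) (Iso.refl _) (Iso.refl _)
          (by erw [Category.id_comp, Category.comp_id]; exact (ChainComplex.of_d X d 0).symm)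
          (by erw [Category.id_comp, Category.comp_id]
              exact (ChainComplex.toSingle₀Equiv_symm_apply_f_zero
                (C := ChainComplex.of X d sq) ε _).symm)
      all_goals rfl
    | succ n =>
      rw [quasiIsoAt_iff_exactAt']
      · exact (ChainComplex.of_exactAt_succ_iff X d sq n).2 (exact_succ n)
      · exact ChainComplex.exactAt_succ_single_obj _ _⟩

def CategoryTheory.ProjectiveResolution.isoExtOfDCompEqZero {R : Type*} [Ring R] {C : Type*}
    [Category C] [Abelian C] [Linear R C] [EnoughProjectives C] {X : C}
    (P : ProjectiveResolution X) (Y : C)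
    (h : ∀ i j (f : P.complex.X i ⟶ Y), P.complex.d j i ≫ f = 0) (n : ℕ) :
    ((Ext R C n).obj (Opposite.op X)).obj Y ≅ ModuleCat.of R (P.complex.X n ⟶ Y) :=
  have hK (i j : ℕ) : (P.complex.linearYonedaObj R Y).d i j = 0 := by
    ext f
    exact h i j f
  P.isoExt n Y ≪≫ ((P.complex.linearYonedaObj R Y).isoHomologyπ _ n rfl (hK _ _)).symm ≪≫
    (P.complex.linearYonedaObj R Y).iCyclesIso n _ rfl (hK _ _)

section

-- `k` acts on `M : ModuleCat A` through `algebraMap k A`, as in `Linear k (ModuleCat A)`.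
open scoped ModuleCat

variable {k A : Type*} [Field k] [Ring A] [Algebra k A]

def ModuleCat.homSelfLinearEquiv (M : ModuleCat A) : (ModuleCat.of A A ⟶ M) ≃ₗ[k] M :=
  ModuleCat.homLinearEquiv.trans (LinearMap.ringLmapEquivSelf A k M)

def ModuleCat.homSelfProdSelfLinearEquiv (M : ModuleCat A) :
    (ModuleCat.of A (A × A) ⟶ M) ≃ₗ[k] M × M :=
  ModuleCat.homLinearEquiv.trans ((LinearMap.coprodEquiv k).symm.trans
    ((LinearMap.ringLmapEquivSelf A k M).prodCongr (LinearMap.ringLmapEquivSelf A k M)))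

end

namespace AAlg

/-- `none` is the empty word and `some (c, n)` the alternating word of length `n + 1` ending in
`ψ_c` (`true ↔ ψ⁺`). -/
abbrev Word : Type := Option (Bool × ℕ)

abbrev WordSpace : Type := Word →₀ ℂ

def append (c : Bool) : WordSpace →ₗ[ℂ] WordSpace :=
  Finsupp.lsum ℂ fun
    | none => Finsupp.lsingle (some (c, 0))
    | some (b, n) => if b = c then 0 else Finsupp.lsingle (some (c, n + 1))

def unappend (c : Bool) : WordSpace →ₗ[ℂ] WordSpace :=
  Finsupp.lsum ℂ fun
    | none => 0
    | some (b, 0) => if b = c then Finsupp.lsingle none else 0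
    | some (b, n + 1) => if b = c then Finsupp.lsingle (some (!b, n)) else 0

lemma append_append (c : Bool) (x : WordSpace) : append c (append c x) = 0 := by
  suffices append c ∘ₗ append c = 0 from congr($this x)
  refine Finsupp.lhom_ext fun w a => ?_
  rcases w with _ | ⟨_ | _, _ | n⟩ <;> cases c <;> simp [append]

lemma unappend_append_add_append_unappend (c : Bool) (x : WordSpace) :
    unappend c (append c x) + append c (unappend c x) = x := by
  suffices unappend c ∘ₗ append c + append c ∘ₗ unappend c = LinearMap.id from congr($this x)
  refine Finsupp.lhom_ext fun w a => ?_
  rcases w with _ | ⟨_ | _, _ | n⟩ <;> cases c <;> simp [append, unappend]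

lemma unappend_append_not (c : Bool) (x : WordSpace) : unappend c (append (!c) x) = 0 := by
  suffices unappend c ∘ₗ append (!c) = 0 from congr($this x)
  refine Finsupp.lhom_ext fun w a => ?_
  rcases w with _ | ⟨_ | _, _ | n⟩ <;> cases c <;> simp [append, unappend]

lemma append_unappend_of_append_eq_zero {c : Bool} {x : WordSpace} (h : append c x = 0) :
    append c (unappend c x) = x := by
  simpa [h] using unappend_append_add_append_unappend c x

lemma append_eq_zero_of_append_add_append_not_eq_zero {c : Bool} {x y : WordSpace}
    (h : append c x + append (!c) y = 0) : append c x = 0 :=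
  calc append c x = append c (unappend c (append c x) + append c (unappend c x)) := by
        rw [unappend_append_add_append_unappend]
    _ = append c (unappend c (append c x + append (!c) y)) := by
        rw [map_add, map_add, append_append, add_zero, unappend_append_not, add_zero]
    _ = 0 := by rw [h, map_zero, map_zero]

lemma append_unappend_add_append_unappend {x : WordSpace} (hx : x none = 0) :
    append true (unappend true x) + append false (unappend false x) = x := by
  have decomp : append true ∘ₗ unappend true + append false ∘ₗ unappend false
      + Finsupp.lsingle none ∘ₗ Finsupp.lapply none = LinearMap.id := by
    refine Finsupp.lhom_ext fun w a => ?_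
    rcases w with _ | ⟨_ | _, _ | n⟩ <;> simp [append, unappend]
  simpa [hx] using congr($decomp x)

def gen (c : Bool) : AAlg := RingQuot.mkAlgHom ℂ ARel (FreeAlgebra.ι ℂ c)

lemma gen_mul_self (c : Bool) : gen c * gen c = 0 := by
  rw [gen, ← map_mul, RingQuot.mkAlgHom_rel ℂ (ARel.sq c), map_zero]

lemma Aaug_gen (c : Bool) : Aaug (gen c) = 0 := by
  rw [Aaug, gen, RingQuot.liftAlgHom_mkAlgHom_apply, FreeAlgebra.lift_ι_apply]

def rightAction : AAlg →ₐ[ℂ] (Module.End ℂ WordSpace)ᵐᵒᵖ :=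
  RingQuot.liftAlgHom ℂ ⟨FreeAlgebra.lift ℂ fun c => MulOpposite.op (append c), by
    rintro _ _ ⟨c⟩
    rw [map_mul, FreeAlgebra.lift_ι_apply, map_zero, ← MulOpposite.op_mul,
      ← MulOpposite.op_zero]
    exact congrArg MulOpposite.op (LinearMap.ext (append_append c))⟩

def toWordSpace : AAlg →ₗ[ℂ] WordSpace :=
  LinearMap.applyₗ (Finsupp.single none 1) ∘ₗ (MulOpposite.opLinearEquiv ℂ).symm.toLinearMap
    ∘ₗ rightAction.toLinearMap

lemma toWordSpace_one : toWordSpace 1 = Finsupp.single none 1 := by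
  simp [toWordSpace]

lemma toWordSpace_mul_gen (a : AAlg) (c : Bool) :
    toWordSpace (a * gen c) = append c (toWordSpace a) := by
  simp [toWordSpace, gen, rightAction]

def altWord : Bool → ℕ → AAlg
  | c, 0 => gen c
  | c, n + 1 => altWord (!c) n * gen c

def word : Word → AAlg
  | none => 1
  | some (c, n) => altWord c n

lemma altWord_mul_gen_self (c : Bool) (n : ℕ) : altWord c n * gen c = 0 := by
  cases n <;> simp [altWord, mul_assoc, gen_mul_self]

lemma Aaug_altWord (c : Bool) (n : ℕ) : Aaug (altWord c n) = 0 := by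
  cases n <;> simp [altWord, Aaug_gen]

lemma toWordSpace_word (w : Word) : toWordSpace (word w) = Finsupp.single w 1 := by
  rcases w with _ | ⟨c, n⟩
  · exact toWordSpace_one
  · induction n generalizing c with
    | zero => simpa [word, altWord, toWordSpace_one, append] using toWordSpace_mul_gen 1 c
    | succ n ih =>
      have ih := ih (!c)
      simp only [word] at ih ⊢
      rw [altWord, toWordSpace_mul_gen, ih]
      simp [append]

lemma word_mul_gen_mem_span (w : Word) (c : Bool) :
    word w * gen c ∈ Submodule.span ℂ (Set.range word) := by
  rcases w with _ | ⟨b, n⟩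
  · exact Submodule.subset_span ⟨some (c, 0), by simp [word, altWord]⟩
  · obtain rfl | rfl : b = c ∨ b = !c := by cases b <;> cases c <;> simp
    · simp [word, altWord_mul_gen_self]
    · exact Submodule.subset_span ⟨some (c, n + 1), by simp [word, altWord]⟩

lemma span_range_word : Submodule.span ℂ (Set.range word) = ⊤ := by
  set S := Submodule.span ℂ (Set.range word)
  suffices ∀ x, ∀ y ∈ S, y * RingQuot.mkAlgHom ℂ ARel x ∈ S by
    refine Submodule.eq_top_iff'.2 fun a => ?_
    obtain ⟨x, rfl⟩ := RingQuot.mkAlgHom_surjective ℂ ARel a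
    simpa using this x 1 (Submodule.subset_span ⟨none, rfl⟩)
  intro x
  induction x using FreeAlgebra.induction with
  | grade0 r =>
    intro y hy
    rw [AlgHom.commutes, ← Algebra.commutes, ← Algebra.smul_def]
    exact S.smul_mem r hy
  | grade1 c =>
    intro y hy
    induction hy using Submodule.span_induction with
    | mem _ hw => obtain ⟨w, rfl⟩ := hw; exact word_mul_gen_mem_span w c
    | zero => simp
    | add _ _ _ _ h₁ h₂ => rw [add_mul]; exact S.add_mem h₁ h₂
    | smul r _ _ h => rw [smul_mul_assoc]; exact S.smul_mem r h
  | mul x₁ x₂ h₁ h₂ => intro y hy; rw [map_mul, ← mul_assoc]; exact h₂ _ (h₁ y hy)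
  | add x₁ x₂ h₁ h₂ => intro y hy; rw [map_add, mul_add]; exact S.add_mem (h₁ y hy) (h₂ y hy)

lemma toWordSpace_bijective : Function.Bijective toWordSpace := by
  have right_inv : toWordSpace ∘ₗ Finsupp.linearCombination ℂ word = LinearMap.id :=
    Finsupp.lhom_ext fun w x => by simp [toWordSpace_word]
  have left_inv : Finsupp.linearCombination ℂ word ∘ₗ toWordSpace = LinearMap.id :=
    LinearMap.ext_on_range span_range_word fun w => by simp [toWordSpace_word]
  exact Function.bijective_iff_has_inverse.2
    ⟨Finsupp.linearCombination ℂ word, LinearMap.congr_fun left_inv,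
      LinearMap.congr_fun right_inv⟩

lemma Aaug_eq_toWordSpace_none (a : AAlg) : Aaug a = toWordSpace a none := by
  have : Aaug.toLinearMap = Finsupp.lapply none ∘ₗ toWordSpace :=
    LinearMap.ext_on_range span_range_word fun w => by
      simp only [AlgHom.toLinearMap_apply, LinearMap.comp_apply, Finsupp.lapply_apply,
        toWordSpace_word]
      rcases w with _ | ⟨c, n⟩ <;> simp [word, Aaug_altWord]
  exact congr($this a)

lemma exists_mul_gen_eq_of_mul_gen_eq_zero {a : AAlg} {c : Bool} (h : a * gen c = 0) :
    ∃ b, b * gen c = a := by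
  obtain ⟨b, hb⟩ := toWordSpace_bijective.2 (unappend c (toWordSpace a))
  refine ⟨b, toWordSpace_bijective.1 ?_⟩
  rw [toWordSpace_mul_gen, hb, append_unappend_of_append_eq_zero]
  rw [← toWordSpace_mul_gen, h, map_zero]

lemma mul_gen_eq_zero_of_mul_gen_add_mul_gen_not_eq_zero {a b : AAlg} {c : Bool}
    (h : a * gen c + b * gen (!c) = 0) : a * gen c = 0 := by
  apply toWordSpace_bijective.1
  rw [toWordSpace_mul_gen, map_zero]
  apply append_eq_zero_of_append_add_append_not_eq_zero (y := toWordSpace b)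
  rw [← toWordSpace_mul_gen, ← toWordSpace_mul_gen, ← map_add, h, map_zero]

lemma exists_mul_gen_add_mul_gen_eq_of_Aaug_eq_zero {a : AAlg} (h : Aaug a = 0) :
    ∃ u v, u * gen true + v * gen false = a := by
  obtain ⟨u, hu⟩ := toWordSpace_bijective.2 (unappend true (toWordSpace a))
  obtain ⟨v, hv⟩ := toWordSpace_bijective.2 (unappend false (toWordSpace a))
  refine ⟨u, v, toWordSpace_bijective.1 ?_⟩
  rw [map_add, toWordSpace_mul_gen, toWordSpace_mul_gen, hu, hv,
    append_unappend_add_append_unappend]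
  rw [← Aaug_eq_toWordSpace_none, h]

def mulGen (c : Bool) : AAlg →ₗ[AAlg] AAlg := LinearMap.toSpanSingleton AAlg AAlg (gen c)

lemma mulGen_apply (c : Bool) (a : AAlg) : mulGen c a = a * gen c := rfl

abbrev resolutionX : ℕ → ModuleCat AAlg
  | 0 => ModuleCat.of AAlg AAlg
  | _ + 1 => ModuleCat.of AAlg (AAlg × AAlg)

def resolutionD : ∀ n, resolutionX (n + 1) ⟶ resolutionX n
  | 0 => ModuleCat.ofHom ((mulGen true).coprod (mulGen false))
  | _ + 1 => ModuleCat.ofHom ((mulGen true).prodMap (mulGen false))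

lemma resolutionD_comp_resolutionD (n : ℕ) : resolutionD (n + 1) ≫ resolutionD n = 0 := by
  cases n <;> ext <;> simp [resolutionD, mulGen_apply, gen_mul_self]

lemma resolutionD_zero_apply (a b : AAlg) :
    resolutionD 0 (a, b) = a * gen true + b * gen false := rfl

lemma resolutionD_succ_apply (n : ℕ) (a b : AAlg) :
    resolutionD (n + 1) (a, b) = (a * gen true, b * gen false) := rfl

instance (n : ℕ) : Projective (resolutionX n) := by
  cases n <;> infer_instance

def augmentation : resolutionX 0 ⟶ Ctriv := ModuleCat.ofHom
  { toFun := Aaug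
    map_add' := map_add Aaug
    map_smul' := map_mul Aaug }

instance : Epi augmentation :=
  (ModuleCat.epi_iff_surjective _).2 fun z => ⟨algebraMap ℂ AAlg z, Aaug.commutes z⟩

lemma resolutionD_zero_comp_augmentation : resolutionD 0 ≫ augmentation = 0 := by
  refine ModuleCat.hom_ext (LinearMap.ext fun ⟨a, b⟩ => ?_)
  show Aaug (a * gen true + b * gen false) = 0
  simp [Aaug_gen]

lemma exact_resolutionD_zero_augmentation :
    (ShortComplex.mk _ _ resolutionD_zero_comp_augmentation).Exact := by
  rw [ShortComplex.moduleCat_exact_iff]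
  intro a ha
  obtain ⟨u, v, huv⟩ := exists_mul_gen_add_mul_gen_eq_of_Aaug_eq_zero ha
  exact ⟨(u, v), huv⟩

lemma exact_resolutionD (n : ℕ) :
    (ShortComplex.mk _ _ (resolutionD_comp_resolutionD n)).Exact := by
  rw [ShortComplex.moduleCat_exact_iff]
  rintro ⟨a, b⟩ h
  obtain ⟨ha, hb⟩ : a * gen true = 0 ∧ b * gen false = 0 := by
    cases n with
    | zero =>
      change a * gen true + b * gen false = 0 at h
      exact ⟨mul_gen_eq_zero_of_mul_gen_add_mul_gen_not_eq_zero h,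
        mul_gen_eq_zero_of_mul_gen_add_mul_gen_not_eq_zero ((add_comm _ _).trans h)⟩
    | succ n => exact Prod.mk_eq_zero.1 h
  obtain ⟨u, rfl⟩ := exists_mul_gen_eq_of_mul_gen_eq_zero ha
  obtain ⟨v, rfl⟩ := exists_mul_gen_eq_of_mul_gen_eq_zero hb
  exact ⟨(u, v), rfl⟩

def resolution : ProjectiveResolution Ctriv :=
  ProjectiveResolution.ofExact resolutionX resolutionD resolutionD_comp_resolutionD
    augmentation resolutionD_zero_comp_augmentation exact_resolutionD_zero_augmentation
    exact_resolutionD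

lemma hom_mul_gen_smul_eq_zero {M : ModuleCat AAlg} (f : M ⟶ Ctriv) (a : AAlg) (c : Bool) (m : M) :
    f ((a * gen c) • m) = 0 := by
  rw [map_smul]
  show Aaug (a * gen c) * (show ℂ from f m) = 0
  rw [map_mul, Aaug_gen, mul_zero, zero_mul]

lemma exists_resolutionD_eq_smul_add_smul (n : ℕ) (a b : AAlg) :
    ∃ e₁ e₂ : resolutionX n,
      resolutionD n (a, b) = (a * gen true) • e₁ + (b * gen false) • e₂ := by
  cases n with
  | zero => exact ⟨1, 1, (resolutionD_zero_apply a b).trans (by simp)⟩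
  | succ n => exact ⟨(1, 0), (0, 1), (resolutionD_succ_apply n a b).trans (by simp)⟩

lemma resolutionD_comp_eq_zero (n : ℕ) (f : resolutionX n ⟶ Ctriv) : resolutionD n ≫ f = 0 := by
  refine ModuleCat.hom_ext (LinearMap.ext fun ⟨a, b⟩ => ?_)
  obtain ⟨e₁, e₂, he⟩ := exists_resolutionD_eq_smul_add_smul n a b
  show f (resolutionD n (a, b)) = 0
  rw [he, map_add, hom_mul_gen_smul_eq_zero, hom_mul_gen_smul_eq_zero, add_zero]

def extIsoHom (n : ℕ) :
    ((Ext ℂ (ModuleCat AAlg) n).obj (Opposite.op Ctriv)).obj Ctriv ≅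
      ModuleCat.of ℂ (resolutionX n ⟶ Ctriv) :=
  resolution.isoExtOfDCompEqZero Ctriv (fun i j f => by
    by_cases hij : i + 1 = j
    · subst hij
      change ChainComplex.of.d resolutionX resolutionD (i + 1) i ≫ f = 0
      rw [ChainComplex.of_d]
      exact resolutionD_comp_eq_zero i f
    · rw [resolution.complex.shape _ _ hij, Limits.zero_comp]) n

section

open scoped ModuleCat

def ctrivLinearEquiv : Ctriv ≃ₗ[ℂ] ℂ where
  toFun z := z
  invFun z := z
  map_add' _ _ := rfl
  map_smul' c (z : ℂ) := congrArg (· * z) (Aaug.commutes c)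
  left_inv _ := rfl
  right_inv _ := rfl

lemma finrank_hom_resolutionX_zero : Module.finrank ℂ (resolutionX 0 ⟶ Ctriv) = 1 :=
  (LinearEquiv.finrank_eq ((ModuleCat.homSelfLinearEquiv Ctriv).trans ctrivLinearEquiv)).trans
    (Module.finrank_self ℂ)

lemma finrank_hom_resolutionX_succ (n : ℕ) :
    Module.finrank ℂ (resolutionX (n + 1) ⟶ Ctriv) = 2 := by
  rw [LinearEquiv.finrank_eq ((ModuleCat.homSelfProdSelfLinearEquiv Ctriv).trans
    (ctrivLinearEquiv.prodCongr ctrivLinearEquiv)), Module.finrank_prod, Module.finrank_self]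

end

end AAlg

/-- **Koszul duality computation in Proposition 5.1.1**:
`Ext•_A(ℂ,ℂ) ≅ A^! = ℂ[x,y]/(xy)`, which is one-dimensional in degree `0`
and two-dimensional in each degree `n ≥ 1`. -/
theorem ext_trivial_module_AAlg :
    Module.finrank ℂ (((Ext ℂ (ModuleCat AAlg) 0).obj (Opposite.op Ctriv)).obj Ctriv) = 1 ∧
    ∀ n : ℕ, 1 ≤ n →
      Module.finrank ℂ (((Ext ℂ (ModuleCat AAlg) n).obj (Opposite.op Ctriv)).obj Ctriv) = 2 := by
  have finrank_ext (n : ℕ) := LinearEquiv.finrank_eq (AAlg.extIsoHom n).toLinearEquiv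
  refine ⟨(finrank_ext 0).trans AAlg.finrank_hom_resolutionX_zero, fun n hn => ?_⟩
  obtain ⟨m, rfl⟩ := Nat.exists_eq_add_of_le' hn
  exact (finrank_ext (m + 1)).trans (AAlg.finrank_hom_resolutionX_succ m)

end
end
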